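/- Let α < 0 and let f : ℝ^n → ℝ be a nonnegative α-concave function. Then the α-difference function Δ_α f is also α-concave. -/

import Mathlib

/-!
For `α < 0` the map `a ↦ a ^ α` is an order-reversing bijection of `[0, ∞]` which turns the
`α`-mean into the arithmetic mean: `M_α(a, b; t) ^ α = t a ^ α + (1 - t) b ^ α`. Consequently
nested `α`-means commute, `M_t(M_½(a₁, b₁), M_½(a₂, b₂)) = M_½(M_t(a₁, a₂), M_t(b₁, b₂))`, and a
supremum inside an `α`-mean becomes an infimum of arithmetic means. If `(x₁ + y₁)/2 = z₁` and
`(x₂ + y₂)/2 = z₂`, then `x = t x₁ + (1 - t) x₂`, `y = t y₁ + (1 - t) y₂` satisfy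
`(x + y)/2 = t z₁ + (1 - t) z₂`, and `α`-concavity of `f` applied to both coordinates gives
`M_t(M_½(f x₁, f(-y₁)), M_½(f x₂, f(-y₂))) ≤ M_½(f x, f(-y)) ≤ Δ_α f(t z₁ + (1 - t) z₂)`.
Taking suprema over the pairs gives the claim.
-/

open MeasureTheory Set
open scoped ENNReal

/-- The `α`-mean (for `α < 0`) of two nonnegative reals:
`M_α(a,b;t) = (t a^α + (1−t) b^α)^{1/α}` if `a, b > 0`, and `0` if `a = 0` or `b = 0`. -/
noncomputable def Malpha (α a b t : ℝ) : ℝ :=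
  if 0 < a ∧ 0 < b then (t * a ^ α + (1 - t) * b ^ α) ^ (1 / α) else 0

/-- The `α`-mean on `[0,∞]`, extending `M_α` to infinite values
(`∞^α = 0` and `0^α = ∞` for `α < 0` are built into `ENNReal` rpow). -/
noncomputable def eMalpha (α : ℝ) (a b : ℝ≥0∞) (t : ℝ) : ℝ≥0∞ :=
  (ENNReal.ofReal t * a ^ α + ENNReal.ofReal (1 - t) * b ^ α) ^ (1 / α)

/-- A nonnegative `f : ℝⁿ → ℝ` is `α`-concave if
`f(t x + (1−t) y) ≥ M_α(f(x), f(y); t)` for all `x, y` and `t ∈ [0,1]`. -/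
def AlphaConcave (α : ℝ) {n : ℕ} (f : (Fin n → ℝ) → ℝ) : Prop :=
  ∀ x y : Fin n → ℝ, ∀ t : ℝ, t ∈ Set.Icc (0 : ℝ) 1 →
    Malpha α (f x) (f y) t ≤ f (t • x + (1 - t) • y)

/-- The `α`-difference function of `f`:
`Δ_α f(z) = sup { M_α(f(x), f(−y); 1/2) : (x+y)/2 = z }`, valued in `[0,∞]`. -/
noncomputable def diffAlpha (α : ℝ) {n : ℕ} (f : (Fin n → ℝ) → ℝ)
    (z : Fin n → ℝ) : ℝ≥0∞ :=
  sSup {r : ℝ≥0∞ | ∃ x y : Fin n → ℝ, (1 / 2 : ℝ) • (x + y) = z ∧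
    r = ENNReal.ofReal (Malpha α (f x) (f (-y)) (1 / 2))}

namespace ENNReal

variable {x y : ℝ≥0∞} {z : ℝ}

theorem rpow_le_rpow_of_nonpos (hz : z ≤ 0) (h : x ≤ y) : y ^ z ≤ x ^ z := by
  rw [← neg_neg z, rpow_neg y, rpow_neg x, ENNReal.inv_le_inv]
  exact rpow_le_rpow h (neg_nonneg.mpr hz)

theorem rpow_le_rpow_iff_of_neg (hz : z < 0) : x ^ z ≤ y ^ z ↔ y ≤ x := by
  refine ⟨fun h => ?_, rpow_le_rpow_of_nonpos hz.le⟩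
  simpa [hz.ne] using rpow_le_rpow_of_nonpos (inv_nonpos.mpr hz.le) h

theorem iSup_rpow_of_neg {ι : Sort*} (hz : z < 0) (f : ι → ℝ≥0∞) :
    (⨆ i, f i) ^ z = ⨅ i, f i ^ z := by
  have hz' : 0 < -z := neg_pos.mpr hz
  rw [← neg_neg z, rpow_neg, ← orderIsoRpow_apply _ hz', OrderIso.map_iSup, inv_iSup]
  simp [rpow_neg]

end ENNReal

section eMalpha

open ENNReal

variable {α t : ℝ}

theorem eMalpha_rpow (hα : α ≠ 0) (a b : ℝ≥0∞) :
    eMalpha α a b t ^ α = ENNReal.ofReal t * a ^ α + ENNReal.ofReal (1 - t) * b ^ α := by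
  rw [eMalpha, one_div, rpow_inv_rpow hα]

theorem eMalpha_le_iff (hα : α < 0) {a b c : ℝ≥0∞} :
    eMalpha α a b t ≤ c ↔ c ^ α ≤ ENNReal.ofReal t * a ^ α + ENNReal.ofReal (1 - t) * b ^ α := by
  rw [← rpow_le_rpow_iff_of_neg hα, eMalpha_rpow hα.ne]

theorem eMalpha_mono (hα : α < 0) {a a' b b' : ℝ≥0∞} (ha : a ≤ a') (hb : b ≤ b') :
    eMalpha α a b t ≤ eMalpha α a' b' t := by
  rw [eMalpha_le_iff hα, eMalpha_rpow hα.ne]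
  exact add_le_add (mul_le_mul_right (rpow_le_rpow_of_nonpos hα.le ha) _)
    (mul_le_mul_right (rpow_le_rpow_of_nonpos hα.le hb) _)

theorem eMalpha_zero (hα : α ≠ 0) (a b : ℝ≥0∞) : eMalpha α a b 0 = b := by
  simp [eMalpha, hα]

theorem eMalpha_one (hα : α ≠ 0) (a b : ℝ≥0∞) : eMalpha α a b 1 = a := by
  simp [eMalpha, hα]

theorem eMalpha_eMalpha_comm (hα : α ≠ 0) (a₁ b₁ a₂ b₂ : ℝ≥0∞) (s t : ℝ) :
    eMalpha α (eMalpha α a₁ b₁ s) (eMalpha α a₂ b₂ s) t =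
      eMalpha α (eMalpha α a₁ a₂ t) (eMalpha α b₁ b₂ t) s := by
  rw [eMalpha, eMalpha_rpow hα, eMalpha_rpow hα, eMalpha, eMalpha_rpow hα, eMalpha_rpow hα]
  ring_nf

/-- At `t = 0` this fails: `Malpha α 0 b 0 = 0`, whereas `eMalpha α 0 b 0 = b`. -/
theorem ofReal_Malpha (hα : α < 0) (ht : t ∈ Ioo 0 1) (a b : ℝ) :
    ENNReal.ofReal (Malpha α a b t) = eMalpha α (ENNReal.ofReal a) (ENNReal.ofReal b) t := by
  obtain ⟨ht0, ht1⟩ := ht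
  by_cases hab : 0 < a ∧ 0 < b
  · obtain ⟨ha, hb⟩ := hab
    have hsum : 0 < t * a ^ α + (1 - t) * b ^ α := by positivity
    rw [Malpha, if_pos ⟨ha, hb⟩, eMalpha, ← ofReal_rpow_of_pos hsum, ofReal_add (by positivity)
      (by positivity), ofReal_mul ht0.le, ofReal_mul (by linarith), ofReal_rpow_of_pos ha,
      ofReal_rpow_of_pos hb]
  · have hα' : 1 / α < 0 := one_div_neg.mpr hα
    rw [Malpha, if_neg hab, ofReal_zero, eq_comm, eMalpha]
    rcases not_and_or.mp hab with ha | hb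
    · rw [ofReal_eq_zero.mpr (not_lt.mp ha), zero_rpow_of_neg hα,
        mul_top (ofReal_pos.mpr ht0).ne', top_add, top_rpow_of_neg hα']
    · rw [ofReal_eq_zero.mpr (not_lt.mp hb), zero_rpow_of_neg hα,
        mul_top (ofReal_pos.mpr (sub_pos.mpr ht1)).ne', add_top, top_rpow_of_neg hα']

theorem eMalpha_iSup_iSup_le (hα : α < 0) {ι κ : Sort*} [Nonempty ι] [Nonempty κ]
    {f : ι → ℝ≥0∞} {g : κ → ℝ≥0∞} {c : ℝ≥0∞} (h : ∀ i j, eMalpha α (f i) (g j) t ≤ c) :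
    eMalpha α (⨆ i, f i) (⨆ j, g j) t ≤ c := by
  simp only [eMalpha_le_iff hα, iSup_rpow_of_neg hα] at h ⊢
  rw [mul_iInf (by simp), mul_iInf (by simp), iInf_add]
  exact le_iInf fun i => by rw [add_iInf]; exact le_iInf (h i)

end eMalpha

namespace AlphaConcave

variable {α : ℝ} {n : ℕ} {f : (Fin n → ℝ) → ℝ}

theorem eMalpha_le (hα : α < 0) (hf : AlphaConcave α f) (x y : Fin n → ℝ) {t : ℝ}
    (ht : t ∈ Icc 0 1) :
    eMalpha α (ENNReal.ofReal (f x)) (ENNReal.ofReal (f y)) t ≤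
      ENNReal.ofReal (f (t • x + (1 - t) • y)) := by
  rcases eq_endpoints_or_mem_Ioo_of_mem_Icc ht with rfl | rfl | ht'
  · simp [eMalpha_zero hα.ne]
  · simp [eMalpha_one hα.ne]
  · rw [← ofReal_Malpha hα ht']
    exact ENNReal.ofReal_le_ofReal (hf x y t ht)

theorem eMalpha_ofReal_Malpha_half_le (hα : α < 0) (hf : AlphaConcave α f)
    (x₁ y₁ x₂ y₂ : Fin n → ℝ) {t : ℝ} (ht : t ∈ Icc 0 1) :
    eMalpha α (ENNReal.ofReal (Malpha α (f x₁) (f (-y₁)) (1 / 2)))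
        (ENNReal.ofReal (Malpha α (f x₂) (f (-y₂)) (1 / 2))) t ≤
      ENNReal.ofReal
        (Malpha α (f (t • x₁ + (1 - t) • x₂)) (f (-(t • y₁ + (1 - t) • y₂))) (1 / 2)) := by
  have half : (1 / 2 : ℝ) ∈ Ioo 0 1 := by norm_num
  simp only [ofReal_Malpha hα half]
  rw [eMalpha_eMalpha_comm hα.ne]
  refine eMalpha_mono hα (hf.eMalpha_le hα x₁ x₂ ht) ?_
  simpa only [smul_neg, neg_add] using hf.eMalpha_le hα (-y₁) (-y₂) ht

end AlphaConcave

theorem diffAlpha_alphaConcave_general {n : ℕ} (α : ℝ) (hα : α < 0)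
    (f : (Fin n → ℝ) → ℝ) (hf : AlphaConcave α f) :
    ∀ x y : Fin n → ℝ, ∀ t : ℝ, t ∈ Set.Icc (0 : ℝ) 1 →
      eMalpha α (diffAlpha α f x) (diffAlpha α f y) t ≤
        diffAlpha α f (t • x + (1 - t) • y) := by
  intro x y t ht
  have hne : ∀ w : Fin n → ℝ,
      {r : ℝ≥0∞ | ∃ x y : Fin n → ℝ, (1 / 2 : ℝ) • (x + y) = w ∧
        r = ENNReal.ofReal (Malpha α (f x) (f (-y)) (1 / 2))}.Nonempty := fun w =>
    ⟨_, w, w, by module, rfl⟩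
  unfold diffAlpha
  rw [sSup_eq_iSup', sSup_eq_iSup']
  have := (hne x).to_subtype
  have := (hne y).to_subtype
  refine eMalpha_iSup_iSup_le hα ?_
  rintro ⟨_, x₁, y₁, rfl, rfl⟩ ⟨_, x₂, y₂, rfl, rfl⟩
  exact (hf.eMalpha_ofReal_Malpha_half_le hα x₁ y₁ x₂ y₂ ht).trans
    (le_sSup ⟨_, _, by module, rfl⟩)

/-- If `α < 0` and `f` is nonnegative and `α`-concave, then `Δ_α f` is
`α`-concave (as a `[0,∞]`-valued function). -/
theorem diffAlpha_alphaConcave {n : ℕ} (α : ℝ) (hα : α < 0)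
    (f : (Fin n → ℝ) → ℝ) (hf0 : ∀ x, 0 ≤ f x) (hf : AlphaConcave α f) :
    ∀ x y : Fin n → ℝ, ∀ t : ℝ, t ∈ Set.Icc (0 : ℝ) 1 →
      eMalpha α (diffAlpha α f x) (diffAlpha α f y) t ≤
        diffAlpha α f (t • x + (1 - t) • y) :=
  diffAlpha_alphaConcave_general α hα f hf
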